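/- Let q ≥ 1 be a real number. For every u ∈ Ω and every real λ with -(q+1) ≤ λ ≤ q+1, one has 1 - λu + qu² ≠ 0. -/

import Mathlib

/-- The interior `Ω` of the region `C`: `|u| < q^(-1/2)`, and if `u` is real
then `|u| < 1/q`. -/
def Omega (q : ℝ) : Set ℂ :=
  {u : ℂ | ‖u‖ < (Real.sqrt q)⁻¹ ∧ (u.im = 0 → |u.re| < 1 / q)}

/-!
A real root `x` of `1 - λx + qx²` would satisfy `1 - λx + qx² ≥ (1 - |x|)(1 - q|x|) > 0` on
`|x| < 1/q ≤ 1`. A non-real root `u` comes with the root `conj u`, so the product of the roots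
gives `q |u|² = 1`, i.e. `|u| = q^(-1/2)`, which lies on the circle bounding `Ω`.
-/

theorem one_sub_mul_add_mul_sq_pos {q lam x : ℝ} (hx : |x| < 1) (hqx : q * |x| < 1)
    (hlam : |lam| ≤ q + 1) : 0 < 1 - lam * x + q * x ^ 2 := by
  have hlinear : lam * x ≤ (q + 1) * |x| :=
    calc lam * x ≤ |lam| * |x| := by rw [← abs_mul]; exact le_abs_self _
      _ ≤ (q + 1) * |x| := mul_le_mul_of_nonneg_right hlam (abs_nonneg x)
  calc 0 < (1 - |x|) * (1 - q * |x|) := mul_pos (by linarith) (by linarith)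
    _ = 1 - (q + 1) * |x| + q * x ^ 2 := by rw [← sq_abs x]; ring
    _ ≤ 1 - lam * x + q * x ^ 2 := by linarith

/-- Vieta for a real quadratic with a non-real root `z`: its other root is `conj z`. -/
theorem mul_normSq_eq_of_quadratic_eq_zero {a b c : ℝ} {z : ℂ} (hz : z.im ≠ 0)
    (h : (a : ℂ) * z ^ 2 + b * z + c = 0) : a * Complex.normSq z = c := by
  have hre := congrArg Complex.re h
  have him := congrArg Complex.im h
  simp only [pow_two, Complex.add_re, Complex.add_im, Complex.mul_re, Complex.mul_im,
    Complex.ofReal_re, Complex.ofReal_im, Complex.zero_re, Complex.zero_im] at hre him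
  have hb : b = -2 * a * z.re :=
    mul_right_cancel₀ hz (by linear_combination him)
  rw [Complex.normSq_apply]
  subst hb
  linear_combination -hre

theorem mul_normSq_lt_one_of_mem_Omega {q : ℝ} (hq : 0 < q) {u : ℂ} (hu : u ∈ Omega q) :
    q * Complex.normSq u < 1 := by
  have hsq : ‖u‖ ^ 2 < q⁻¹ := by
    rw [← Real.sq_sqrt hq.le, ← inv_pow]
    exact pow_lt_pow_left₀ hu.1 (norm_nonneg u) two_ne_zero
  rw [← Complex.sq_norm]
  calc q * ‖u‖ ^ 2 < q * q⁻¹ := mul_lt_mul_of_pos_left hsq hq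
    _ = 1 := mul_inv_cancel₀ hq.ne'

/-- For `u ∈ Ω` and `λ ∈ [-(q+1), q+1]`, one has `1 - λu + qu² ≠ 0`. -/
theorem one_sub_mul_add_sq_ne_zero (q : ℝ) (hq : 1 ≤ q)
    (u : ℂ) (hu : u ∈ Omega q) (lam : ℝ)
    (hlam₁ : -(q + 1) ≤ lam) (hlam₂ : lam ≤ q + 1) :
    1 - (lam : ℂ) * u + (q : ℂ) * u ^ 2 ≠ 0 := by
  have hq0 : 0 < q := by linarith
  intro h
  by_cases him : u.im = 0
  · have hx : |u.re| < 1 / q := hu.2 him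
    have hqx : q * |u.re| < 1 := by rwa [lt_div_iff₀ hq0, mul_comm] at hx
    have hx1 : |u.re| < 1 := hx.trans_le ((div_le_one hq0).mpr hq)
    have hpos := one_sub_mul_add_mul_sq_pos hx1 hqx (abs_le.mpr ⟨hlam₁, hlam₂⟩)
    rw [← Complex.re_add_im u, him, Complex.ofReal_zero, zero_mul, add_zero] at h
    exact hpos.ne' (by exact_mod_cast h)
  · have hvieta : q * Complex.normSq u = 1 :=
      mul_normSq_eq_of_quadratic_eq_zero (b := -lam) him
        (by push_cast; linear_combination h)
    exact (mul_normSq_lt_one_of_mem_Omega hq0 hu).ne hvieta
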